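/- Let n ≥ 1, C, D > 0 and t ∈ (0,1]. Suppose a heat kernel bound K(τ, r) ≤ C·τ^{-n/2}·exp(-r²/(4Dτ)) holds, and suppose the underlying n-manifold satisfies Vol(B_r(x)) ≤ 2ωₙrⁿ for r ≤ 1. Then ∫_{t/2}^t ∫_{B(x,√t)} K(t-s, d(x,y))^{(n+4)/(n+3)} dy ds ≤ C'(n, C, D)·t^{(n+6)/(2(n+3))}. -/
import Mathlib

open MeasureTheory Real

lemma sum_aux (n : ℕ) {q : ℝ} (hq : 0 < q) :
    Summable (fun k : ℕ => ((k : ℝ) + 1) ^ n * Real.exp (-q * (k : ℝ) ^ 2)) := by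
  have hr : ‖Real.exp (-q)‖ < 1 := by
    rw [Real.norm_eq_abs, abs_of_pos (Real.exp_pos _)]
    exact Real.exp_lt_one_iff.mpr (by linarith)
  have h1 : Summable (fun k : ℕ => (k : ℝ) ^ n * Real.exp (-q) ^ k) :=
    summable_pow_mul_geometric_of_norm_lt_one n hr
  have h2 : Summable (fun k : ℕ => ((k : ℝ) + 1) ^ n * Real.exp (-q) ^ (k + 1)) := by
    have := h1.comp_injective (add_left_injective 1)
    simp only [Function.comp_def] at this
    push_cast at this
    exact this
  refine Summable.of_nonneg_of_le (fun k => by positivity) (fun k => ?_)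
    (h2.mul_left (Real.exp q))
  have hek : Real.exp (-q) ^ (k + 1) = Real.exp (-q * (k + 1)) := by
    rw [← Real.exp_nat_mul]; congr 1; push_cast; ring
  rw [hek]
  have hle : Real.exp (-q * (k : ℝ) ^ 2) ≤ Real.exp q * Real.exp (-q * ((k : ℝ) + 1)) := by
    rw [← Real.exp_add]
    apply Real.exp_le_exp.mpr
    have hkk : (k : ℕ) ≤ k ^ 2 := Nat.le_self_pow two_ne_zero k
    have : (k : ℝ) ≤ (k : ℝ) ^ 2 := by exact_mod_cast hkk
    nlinarith
  calc ((k : ℝ) + 1) ^ n * Real.exp (-q * (k : ℝ) ^ 2)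
      ≤ ((k : ℝ) + 1) ^ n * (Real.exp q * Real.exp (-q * ((k : ℝ) + 1))) := by
        apply mul_le_mul_of_nonneg_left hle (by positivity)
    _ = Real.exp q * (((k : ℝ) + 1) ^ n * Real.exp (-q * ((k : ℝ) + 1))) := by ring
    _ ≤ Real.exp q * (((k : ℝ) + 1) ^ n * Real.exp (-q * ((k : ℝ) + 1))) := le_rfl

lemma inner_bound (n : ℕ) (C D ω p : ℝ) (hC : 0 < C) (hD : 0 < D) (hω : 0 < ω) (hp : 0 < p)
    {M : Type} [MetricSpace M] [MeasurableSpace M] (μ : Measure M)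
    (hvol : ∀ (x : M) (r : ℝ), 0 < r → r ≤ 1 →
      μ (Metric.ball x r) ≤ ENNReal.ofReal (2 * ω * r ^ n))
    (K : ℝ → ℝ → ℝ) (hKpos : ∀ τ r, 0 ≤ K τ r)
    (hK : ∀ τ r : ℝ, 0 < τ → 0 ≤ r →
      K τ r ≤ C * τ ^ (-(n : ℝ) / 2) * Real.exp (-r ^ 2 / (4 * D * τ)))
    (x : M) (t τ : ℝ) (ht : 0 < t) (ht1 : t ≤ 1) (hτ : 0 < τ) :
    (∫ y in Metric.ball x (Real.sqrt t), K τ (dist x y) ^ p ∂μ)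
      ≤ (2 * ω * C ^ p * ∑' k : ℕ, ((k : ℝ) + 1) ^ n * Real.exp (-(p / (4 * D)) * (k : ℝ) ^ 2))
        * τ ^ (-(n : ℝ) / 2 * p + (n : ℝ) / 2) := by
  have hq : 0 < p / (4 * D) := by positivity
  set q := p / (4 * D) with hq_def
  have hsum := sum_aux n hq
  set S := ∑' k : ℕ, ((k : ℝ) + 1) ^ n * Real.exp (-q * (k : ℝ) ^ 2) with hS_def
  have hS1 : (1 : ℝ) ≤ S := by
    rw [hS_def]
    calc (1 : ℝ) = (((0 : ℕ) : ℝ) + 1) ^ n * Real.exp (-q * ((0 : ℕ) : ℝ) ^ 2) := by norm_num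
      _ ≤ _ := Summable.le_tsum hsum 0 (fun i _ => by positivity)
  have hCp : 0 < C ^ p := Real.rpow_pos_of_pos hC p
  have hS0 : (0 : ℝ) < S := lt_of_lt_of_le one_pos hS1
  have hA : 0 < 2 * ω * C ^ p * S := mul_pos (by positivity) hS0
  have hτe : 0 < τ ^ (-(n : ℝ) / 2 * p + (n : ℝ) / 2) := Real.rpow_pos_of_pos hτ _
  by_cases hint : IntegrableOn (fun y => K τ (dist x y) ^ p) (Metric.ball x (Real.sqrt t)) μ
  swap
  · rw [MeasureTheory.integral_undef hint]
    exact le_of_lt (mul_pos hA hτe)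
  have hsτ : 0 < Real.sqrt τ := Real.sqrt_pos.mpr hτ
  set ν := μ.restrict (Metric.ball x (Real.sqrt t)) with hν_def
  have hnn : 0 ≤ᵐ[ν] fun y => K τ (dist x y) ^ p :=
    Filter.Eventually.of_forall (fun y => Real.rpow_nonneg (hKpos _ _) _)
  rw [MeasureTheory.integral_eq_lintegral_of_nonneg_ae hnn hint.aestronglyMeasurable]
  set c : ℕ → ℝ := fun k => C ^ p * τ ^ (-(n : ℝ) / 2 * p) * Real.exp (-q * (k : ℝ) ^ 2)
    with hc_def
  have hc_nonneg : ∀ k, 0 ≤ c k := fun k => by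
    have := Real.rpow_nonneg hτ.le (-(n : ℝ) / 2 * p); positivity
  set U : ℕ → Set M := fun k => toMeasurable μ (Metric.ball x (((k : ℝ) + 1) * Real.sqrt τ))
    with hU_def
  have hUmeas : ∀ k, MeasurableSet (U k) := fun k => measurableSet_toMeasurable _ _
  -- pointwise domination
  have pointwise : ∀ y, ENNReal.ofReal (K τ (dist x y) ^ p)
      ≤ ∑' k, (U k).indicator (fun _ => ENNReal.ofReal (c k)) y := by
    intro y
    set d := dist x y with hd_def
    have hd : 0 ≤ d := dist_nonneg
    set k := ⌊d / Real.sqrt τ⌋₊ with hk_def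
    have hk1 : (k : ℝ) * Real.sqrt τ ≤ d := by
      have h := Nat.floor_le (div_nonneg hd hsτ.le)
      calc (k : ℝ) * Real.sqrt τ ≤ d / Real.sqrt τ * Real.sqrt τ :=
            mul_le_mul_of_nonneg_right h hsτ.le
        _ = d := div_mul_cancel₀ d hsτ.ne'
    have hk2 : d < ((k : ℝ) + 1) * Real.sqrt τ := by
      have h := Nat.lt_floor_add_one (d / Real.sqrt τ)
      calc d = d / Real.sqrt τ * Real.sqrt τ := (div_mul_cancel₀ d hsτ.ne').symm
        _ < ((k : ℝ) + 1) * Real.sqrt τ := mul_lt_mul_of_pos_right h hsτ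
    have hmem : y ∈ U k :=
      subset_toMeasurable _ _ (by rw [Metric.mem_ball, dist_comm]; exact hk2)
    have hfy : K τ d ^ p ≤ c k := by
      have hb1 : 0 ≤ τ ^ (-(n : ℝ) / 2) := Real.rpow_nonneg hτ.le _
      calc K τ d ^ p
          ≤ (C * τ ^ (-(n : ℝ) / 2) * Real.exp (-d ^ 2 / (4 * D * τ))) ^ p :=
            Real.rpow_le_rpow (hKpos _ _) (hK τ d hτ hd) hp.le
        _ = C ^ p * (τ ^ (-(n : ℝ) / 2)) ^ p * Real.exp (-d ^ 2 / (4 * D * τ)) ^ p := by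
            rw [Real.mul_rpow (by positivity) (Real.exp_nonneg _),
              Real.mul_rpow hC.le hb1]
        _ = C ^ p * τ ^ (-(n : ℝ) / 2 * p) * Real.exp (-d ^ 2 / (4 * D * τ) * p) := by
            rw [← Real.rpow_mul hτ.le, ← Real.exp_mul]
        _ ≤ c k := by
            rw [hc_def]
            apply mul_le_mul_of_nonneg_left _ (by positivity)
            apply Real.exp_le_exp.mpr
            have hd2 : (k : ℝ) ^ 2 * τ ≤ d ^ 2 := by
              have h1 : ((k : ℝ) * Real.sqrt τ) ^ 2 ≤ d ^ 2 := by
                apply sq_le_sq' _ hk1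
                have : 0 ≤ (k : ℝ) * Real.sqrt τ := by positivity
                linarith
              have h2 : ((k : ℝ) * Real.sqrt τ) ^ 2 = (k : ℝ) ^ 2 * τ := by
                rw [mul_pow, Real.sq_sqrt hτ.le]
              linarith
            have key : p / (4 * D) * (k : ℝ) ^ 2 ≤ d ^ 2 / (4 * D * τ) * p := by
              rw [div_mul_eq_mul_div, div_mul_eq_mul_div,
                div_le_div_iff₀ (by positivity) (by positivity)]
              nlinarith [mul_le_mul_of_nonneg_left hd2 (by positivity : (0:ℝ) ≤ 4 * D * p)]
            rw [hq_def]
            calc -d ^ 2 / (4 * D * τ) * p = -(d ^ 2 / (4 * D * τ) * p) := by ring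
              _ ≤ -(p / (4 * D) * (k : ℝ) ^ 2) := neg_le_neg key
              _ = -(p / (4 * D)) * (k : ℝ) ^ 2 := by ring
    calc ENNReal.ofReal (K τ d ^ p) ≤ ENNReal.ofReal (c k) := ENNReal.ofReal_le_ofReal hfy
      _ = (U k).indicator (fun _ => ENNReal.ofReal (c k)) y := (Set.indicator_of_mem hmem (fun _ => ENNReal.ofReal (c k))).symm
      _ ≤ ∑' j, (U j).indicator (fun _ => ENNReal.ofReal (c j)) y := ENNReal.le_tsum k
  -- measure of pieces
  have hν : ∀ k : ℕ, ν (U k) ≤ ENNReal.ofReal (2 * ω * (((k : ℝ) + 1) * Real.sqrt τ) ^ n) := by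
    intro k
    have hr : 0 < ((k : ℝ) + 1) * Real.sqrt τ := by positivity
    rw [hν_def, Measure.restrict_apply (hUmeas k)]
    by_cases hcase : ((k : ℝ) + 1) * Real.sqrt τ ≤ 1
    · calc μ (U k ∩ Metric.ball x (Real.sqrt t)) ≤ μ (U k) := measure_mono Set.inter_subset_left
        _ = μ (Metric.ball x (((k : ℝ) + 1) * Real.sqrt τ)) := measure_toMeasurable _
        _ ≤ ENNReal.ofReal (2 * ω * (((k : ℝ) + 1) * Real.sqrt τ) ^ n) := hvol x _ hr hcase
    · push_neg at hcase
      calc μ (U k ∩ Metric.ball x (Real.sqrt t)) ≤ μ (Metric.ball x (Real.sqrt t)) :=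
            measure_mono Set.inter_subset_right
        _ ≤ ENNReal.ofReal (2 * ω * Real.sqrt t ^ n) :=
            hvol x _ (Real.sqrt_pos.mpr ht) (Real.sqrt_le_one.mpr ht1)
        _ ≤ ENNReal.ofReal (2 * ω * (((k : ℝ) + 1) * Real.sqrt τ) ^ n) := by
            apply ENNReal.ofReal_le_ofReal
            apply mul_le_mul_of_nonneg_left _ (by positivity)
            apply pow_le_pow_left₀ (Real.sqrt_nonneg t)
            have h1 : Real.sqrt t ≤ 1 := Real.sqrt_le_one.mpr ht1
            linarith
  -- the real sum value
  have hsum2 : Summable (fun k : ℕ =>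
      2 * ω * C ^ p * τ ^ (-(n : ℝ) / 2 * p + (n : ℝ) / 2)
        * (((k : ℝ) + 1) ^ n * Real.exp (-q * (k : ℝ) ^ 2))) := hsum.mul_left _
  have hterm : ∀ k : ℕ, c k * (2 * ω * (((k : ℝ) + 1) * Real.sqrt τ) ^ n)
      = 2 * ω * C ^ p * τ ^ (-(n : ℝ) / 2 * p + (n : ℝ) / 2)
          * (((k : ℝ) + 1) ^ n * Real.exp (-q * (k : ℝ) ^ 2)) := by
    intro k
    have h1 : Real.sqrt τ ^ n = τ ^ ((n : ℝ) / 2) := by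
      rw [← Real.rpow_natCast (Real.sqrt τ) n, Real.sqrt_eq_rpow, ← Real.rpow_mul hτ.le]
      congr 1
      ring
    have h2 : τ ^ (-(n : ℝ) / 2 * p + (n : ℝ) / 2)
        = τ ^ (-(n : ℝ) / 2 * p) * τ ^ ((n : ℝ) / 2) := Real.rpow_add hτ _ _
    rw [hc_def, mul_pow, h1, h2]; ring
  -- put it together
  apply ENNReal.toReal_le_of_le_ofReal (le_of_lt (mul_pos hA hτe))
  calc ∫⁻ y, ENNReal.ofReal (K τ (dist x y) ^ p) ∂ν
      ≤ ∫⁻ y, ∑' k, (U k).indicator (fun _ => ENNReal.ofReal (c k)) y ∂ν :=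
        lintegral_mono pointwise
    _ = ∑' k, ∫⁻ y, (U k).indicator (fun _ => ENNReal.ofReal (c k)) y ∂ν :=
        lintegral_tsum (fun k => (measurable_const.indicator (hUmeas k)).aemeasurable)
    _ = ∑' k, ENNReal.ofReal (c k) * ν (U k) := by
        refine tsum_congr (fun k => ?_)
        rw [lintegral_indicator_const (hUmeas k)]
    _ ≤ ∑' k, ENNReal.ofReal (c k)
          * ENNReal.ofReal (2 * ω * (((k : ℝ) + 1) * Real.sqrt τ) ^ n) :=
        ENNReal.tsum_le_tsum (fun k => mul_le_mul_right (hν k) _)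
    _ = ∑' k, ENNReal.ofReal (c k * (2 * ω * (((k : ℝ) + 1) * Real.sqrt τ) ^ n)) := by
        refine tsum_congr (fun k => ?_)
        rw [← ENNReal.ofReal_mul (hc_nonneg k)]
    _ = ENNReal.ofReal (∑' k, c k * (2 * ω * (((k : ℝ) + 1) * Real.sqrt τ) ^ n)) := by
        rw [ENNReal.ofReal_tsum_of_nonneg (fun k => by
          have := hc_nonneg k
          positivity) (by
            apply Summable.congr hsum2
            intro k
            exact (hterm k).symm)]
    _ = ENNReal.ofReal (2 * ω * C ^ p * S * τ ^ (-(n : ℝ) / 2 * p + (n : ℝ) / 2)) := by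
        congr 1
        rw [tsum_congr hterm, tsum_mul_left]
        ring

theorem stmt_12 (n : ℕ) (hn : 1 ≤ n) (C D ω : ℝ) (hC : 0 < C) (hD : 0 < D) (hω : 0 < ω) :
    ∃ C' : ℝ, 0 < C' ∧
      ∀ (M : Type) (_ : MetricSpace M) (_ : MeasurableSpace M) (μ : Measure M)
        (hvol : ∀ (x : M) (r : ℝ), 0 < r → r ≤ 1 →
          μ (Metric.ball x r) ≤ ENNReal.ofReal (2 * ω * r ^ n))
        (K : ℝ → ℝ → ℝ) (hKpos : ∀ τ r, 0 ≤ K τ r)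
        (hK : ∀ τ r : ℝ, 0 < τ → 0 ≤ r →
          K τ r ≤ C * τ ^ (-(n : ℝ) / 2) * Real.exp (-r ^ 2 / (4 * D * τ)))
        (x : M) (t : ℝ), 0 < t → t ≤ 1 →
        (∫ s in (t / 2)..t, ∫ y in Metric.ball x (Real.sqrt t),
            K (t - s) (dist x y) ^ (((n : ℝ) + 4) / ((n : ℝ) + 3)) ∂μ) ≤
          C' * t ^ (((n : ℝ) + 6) / (2 * ((n : ℝ) + 3))) := by
  have hn3 : (0 : ℝ) < (n : ℝ) + 3 := by positivity
  set p : ℝ := ((n : ℝ) + 4) / ((n : ℝ) + 3) with hp_def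
  have hp : 0 < p := by positivity
  set q : ℝ := p / (4 * D) with hq_def
  have hq : 0 < q := by positivity
  set S : ℝ := ∑' k : ℕ, ((k : ℝ) + 1) ^ n * Real.exp (-q * (k : ℝ) ^ 2) with hS_def
  have hsum := sum_aux n hq
  have hS1 : (1 : ℝ) ≤ S := by
    rw [hS_def]
    calc (1 : ℝ) = (((0 : ℕ) : ℝ) + 1) ^ n * Real.exp (-q * ((0 : ℕ) : ℝ) ^ 2) := by norm_num
      _ ≤ _ := Summable.le_tsum hsum 0 (fun i _ => by positivity)
  have hS0 : (0 : ℝ) < S := lt_of_lt_of_le one_pos hS1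
  have hCp : 0 < C ^ p := Real.rpow_pos_of_pos hC p
  set b : ℝ := (n : ℝ) / (2 * ((n : ℝ) + 3)) with hb_def
  have hb0 : 0 < b := by positivity
  have hb1 : b < 1 := by
    rw [hb_def, div_lt_one (by positivity)]
    linarith [Nat.cast_nonneg (α := ℝ) n]
  have hA : 0 < 2 * ω * C ^ p * S := mul_pos (by positivity) hS0
  set A : ℝ := 2 * ω * C ^ p * S with hA_def
  have he : -(n : ℝ) / 2 * p + (n : ℝ) / 2 = -b := by
    rw [hp_def, hb_def]
    field_simp
    ring
  have hexp : -b + 1 = ((n : ℝ) + 6) / (2 * ((n : ℝ) + 3)) := by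
    rw [hb_def]
    field_simp
    ring
  refine ⟨A / (1 - b), div_pos hA (by linarith), ?_⟩
  intro M _ _ μ hvol K hKpos hK x t ht ht1
  have hG_int : IntervalIntegrable (fun s => A * (t - s) ^ (-b)) volume (t / 2) t := by
    have h0 : IntervalIntegrable (fun u : ℝ => u ^ (-b)) volume (t - t / 2) (t - t) :=
      intervalIntegral.intervalIntegrable_rpow' (by linarith)
    have h1 := (h0.comp_sub_left t).const_mul A
    have e1 : t - (t - t / 2) = t / 2 := by ring
    have e2 : t - (t - t) = t := by ring
    rw [e1, e2] at h1
    exact h1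
  by_cases hF : IntervalIntegrable
      (fun s => ∫ y in Metric.ball x (Real.sqrt t),
        K (t - s) (dist x y) ^ (((n : ℝ) + 4) / ((n : ℝ) + 3)) ∂μ) volume (t / 2) t
  swap
  · rw [intervalIntegral.integral_undef hF]
    exact mul_nonneg (le_of_lt (div_pos hA (by linarith))) (Real.rpow_nonneg ht.le _)
  have hmono : (∫ s in (t / 2)..t, ∫ y in Metric.ball x (Real.sqrt t),
        K (t - s) (dist x y) ^ (((n : ℝ) + 4) / ((n : ℝ) + 3)) ∂μ)
      ≤ ∫ s in (t / 2)..t, A * (t - s) ^ (-b) := by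
    apply intervalIntegral.integral_mono_ae_restrict (by linarith) hF hG_int
    have hae : ∀ᵐ s ∂(volume.restrict (Set.Icc (t / 2) t)), s ≠ t := by
      refine (ae_iff).mpr ?_
      have : {s : ℝ | ¬ s ≠ t} = {t} := by ext s; simp
      rw [this, Measure.restrict_apply (measurableSet_singleton t)]
      exact measure_mono_null Set.inter_subset_left (measure_singleton t)
    filter_upwards [ae_restrict_mem measurableSet_Icc, hae] with s hs hst
    have hτ : 0 < t - s := by
      rcases lt_or_eq_of_le hs.2 with h | h
      · linarith
      · exact absurd h hst
    calc (∫ y in Metric.ball x (Real.sqrt t),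
          K (t - s) (dist x y) ^ (((n : ℝ) + 4) / ((n : ℝ) + 3)) ∂μ)
        ≤ (2 * ω * C ^ p * S) * (t - s) ^ (-(n : ℝ) / 2 * p + (n : ℝ) / 2) :=
          inner_bound n C D ω p hC hD hω hp μ hvol K hKpos hK x t (t - s) ht ht1 hτ
      _ = A * (t - s) ^ (-b) := by rw [he, hA_def]
  have hval : (∫ s in (t / 2)..t, A * (t - s) ^ (-b))
      = A * ((t / 2) ^ (-b + 1) / (-b + 1)) := by
    rw [intervalIntegral.integral_const_mul]
    congr 1
    have h1 : (∫ s in (t / 2)..t, (t - s) ^ (-b))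
        = ∫ u in (t - t)..(t - t / 2), u ^ (-b) :=
      intervalIntegral.integral_comp_sub_left (fun u : ℝ => u ^ (-b)) t
    have e1 : t - t = 0 := by ring
    have e2 : t - t / 2 = t / 2 := by ring
    rw [h1, e1, e2, integral_rpow (Or.inl (by linarith : (-1 : ℝ) < -b))]
    rw [Real.zero_rpow (by linarith : -b + 1 ≠ 0)]
    ring
  calc (∫ s in (t / 2)..t, ∫ y in Metric.ball x (Real.sqrt t),
        K (t - s) (dist x y) ^ (((n : ℝ) + 4) / ((n : ℝ) + 3)) ∂μ)
      ≤ ∫ s in (t / 2)..t, A * (t - s) ^ (-b) := hmono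
    _ = A * ((t / 2) ^ (-b + 1) / (-b + 1)) := hval
    _ ≤ A / (1 - b) * t ^ (((n : ℝ) + 6) / (2 * ((n : ℝ) + 3))) := by
        rw [← hexp]
        have hle : (t / 2) ^ (-b + 1) ≤ t ^ (-b + 1) :=
          Real.rpow_le_rpow (by linarith) (by linarith) (by linarith)
        have h1b : (1 : ℝ) - b = -b + 1 := by ring
        rw [h1b]
        have hc : (0 : ℝ) < -b + 1 := by linarith
        calc A * ((t / 2) ^ (-b + 1) / (-b + 1)) = A / (-b + 1) * (t / 2) ^ (-b + 1) := by ring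
          _ ≤ A / (-b + 1) * t ^ (-b + 1) :=
            mul_le_mul_of_nonneg_left hle (le_of_lt (div_pos hA hc))
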